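/- arXiv:2110.07684 — 7 statements merged into one kernel-verified Lean document; each statement's English description precedes it below -/
import Mathlib

section
/- Let X be a metric space, φ : X → X a map, x₀ ∈ X a non-wandering point, and f : X → ℂ a continuous function. Assume that f(φ^l(x₀)) · f(x₀) = 0 for every l ≥ 1 and that the family {(f∘φ^l) · f}_{l ≥ 1} is equicontinuous at x₀. Then f(x₀) = 0. -/
open Filter Topology

/-- If `x₀` is non-wandering, `f` is continuous, `f(φ^l(x₀)) · f(x₀) = 0` for
every `l ≥ 1`, and the family `{(f ∘ φ^l) · f}_{l ≥ 1}` is equicontinuous at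
`x₀`, then `f(x₀) = 0`. -/
theorem nonwandering_point_vanishing
    {X : Type*} [MetricSpace X] (φ : X → X) (x₀ : X)
    (hnw : ∀ W : Set X, IsOpen W → x₀ ∈ W → ∃ m, 1 ≤ m ∧ (W ∩ φ^[m] '' W).Nonempty)
    (f : X → ℂ) (hf : Continuous f)
    (hzero : ∀ l : ℕ, 1 ≤ l → f (φ^[l] x₀) * f x₀ = 0)
    (heq : ∀ ε > (0 : ℝ), ∃ U ∈ 𝓝 x₀, ∀ x ∈ U, ∀ l : ℕ, 1 ≤ l →
      ‖f (φ^[l] x) * f x - f (φ^[l] x₀) * f x₀‖ < ε) :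
    f x₀ = 0 := by
  by_contra h
  have hc : 0 < ‖f x₀‖ := norm_pos_iff.mpr h
  set c := ‖f x₀‖ with hcdef
  obtain ⟨U, hU, hUε⟩ := heq (c ^ 2 / 4) (by positivity)
  obtain ⟨U', hU'U, hU'open, hx₀U'⟩ := mem_nhds_iff.mp hU
  set V : Set X := {x | c / 2 < ‖f x‖} with hVdef
  have hVopen : IsOpen V :=
    isOpen_lt continuous_const (continuous_norm.comp hf)
  have hx₀V : x₀ ∈ V := by
    simp only [hVdef, Set.mem_setOf_eq]
    linarith
  obtain ⟨m, hm, z, hzW, y, hyW, hzy⟩ :=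
    hnw (U' ∩ V) (hU'open.inter hVopen) ⟨hx₀U', hx₀V⟩
  have h1 := hUε y (hU'U hyW.1) m hm
  rw [hzero m hm, sub_zero] at h1
  have hz2 : c / 2 < ‖f z‖ := hzW.2
  have hy2 : c / 2 < ‖f y‖ := hyW.2
  have h2 : c ^ 2 / 4 < ‖f (φ^[m] y) * f y‖ := by
    rw [norm_mul, hzy]
    nlinarith [norm_nonneg (f z), norm_nonneg (f y)]
  linarith
end

section
/- Let X be a locally compact metrizable space, φ : X → X a homeomorphism, f ∈ C₀(X), and n₀ ∈ ℕ. Assume: (i) f(φ^{n₀+l}(x)) · f(x) = 0 for every l ∈ ℕ and every accumulation point x of X; (ii) the family {(f∘φ^{n₀+l}) · f}_{l ∈ ℕ} is equicontinuous at every point of X; (iii) f(x) = 0 for every recurrent point x. Then f(x) = 0 for every non-wandering point x of X; equivalently, f vanishes on the complement of the set of wandering points. -/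
open Filter Topology

/-- Let `X` be locally compact metrizable, `φ` a homeomorphism of `X`, and
`f ∈ C₀(X)`. If `f(φ^{n₀+l}(x)) f(x) = 0` for all `l` and all accumulation
points `x`, the family `{(f ∘ φ^{n₀+l}) · f}_l` is equicontinuous at every
point, and `f` vanishes at every recurrent point, then `f` vanishes at every
non-wandering point. -/
theorem vanishing_on_nonwandering_points
    {X : Type*} [TopologicalSpace X] [LocallyCompactSpace X]
    [TopologicalSpace.MetrizableSpace X]
    (φ : X ≃ₜ X) (f : X → ℂ) (hfc : Continuous f)
    (hf0 : Tendsto f (cocompact X) (𝓝 0)) (n₀ : ℕ)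
    (hacc : ∀ x : X, ¬ IsOpen ({x} : Set X) → ∀ l : ℕ,
      f ((⇑φ)^[n₀ + l] x) * f x = 0)
    (heq : ∀ x₀ : X, ∀ ε > (0 : ℝ), ∃ U ∈ 𝓝 x₀, ∀ x ∈ U, ∀ l : ℕ,
      ‖f ((⇑φ)^[n₀ + l] x) * f x - f ((⇑φ)^[n₀ + l] x₀) * f x₀‖ < ε)
    (hrec : ∀ x : X,
      (∃ n : ℕ → ℕ, StrictMono n ∧ Tendsto (fun k => (⇑φ)^[n k] x) atTop (𝓝 x)) →
      f x = 0) :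
    ∀ x : X,
      (∀ W : Set X, IsOpen W → x ∈ W → ∃ m, 1 ≤ m ∧ (W ∩ (⇑φ)^[m] '' W).Nonempty) →
      f x = 0 := by
  letI := TopologicalSpace.metrizableSpaceMetric X
  intro x hx
  by_cases hper : ∃ m : ℕ, 1 ≤ m ∧ (⇑φ)^[m] x = x
  · -- periodic ⇒ recurrent
    obtain ⟨m, hm1, hmx⟩ := hper
    apply hrec
    refine ⟨fun k => (k + 1) * m, ?_, ?_⟩
    · intro a b hab
      have : a + 1 < b + 1 := by omega
      exact Nat.mul_lt_mul_of_lt_of_le this (le_refl m) hm1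
    · have key : ∀ k : ℕ, (⇑φ)^[(k + 1) * m] x = x := by
        intro k
        rw [mul_comm, Function.iterate_mul]
        exact Function.iterate_fixed hmx (k + 1)
      simp only [key]
      exact tendsto_const_nhds
  · push_neg at hper
    -- x is not isolated
    have hniso : ¬ IsOpen ({x} : Set X) := by
      intro ho
      obtain ⟨m, hm1, z, hz1, y, hy, hyz⟩ := hx {x} ho rfl
      simp only [Set.mem_singleton_iff] at hz1 hy
      exact hper m hm1 (by rw [hy] at hyz; rw [hyz, hz1])
    by_contra hfx
    set c : ℝ := ‖f x‖ with hc_def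
    have hc : 0 < c := norm_pos_iff.mpr hfx
    obtain ⟨U, hU, hUp⟩ := heq x (c ^ 2 / 2) (by positivity)
    -- separating neighborhoods for small iterates
    have hsep : ∀ j : ℕ, ∃ V : Set X, IsOpen V ∧ x ∈ V ∧
        (1 ≤ j → ∀ y ∈ V, ∀ z ∈ V, (⇑φ)^[j] y ≠ z) := by
      intro j
      rcases Nat.eq_zero_or_pos j with hj | hj
      · exact ⟨Set.univ, isOpen_univ, trivial, by omega⟩
      · have hne : (⇑φ)^[j] x ≠ x := hper j hj
        obtain ⟨A, B, hA, hB, hxA, hxB, hAB⟩ := t2_separation hne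
        refine ⟨B ∩ (⇑φ)^[j] ⁻¹' A, ?_, ⟨hxB, hxA⟩, ?_⟩
        · exact hB.inter (((φ.continuous.iterate j)).isOpen_preimage A hA)
        · intro _ y hy z hz heq'
          have hzA : z ∈ A := heq' ▸ hy.2
          exact Set.disjoint_left.mp hAB hzA hz.1
    choose V hVopen hVx hVsep using hsep
    -- the neighborhood W
    set G : Set X := {y | 3 * c / 4 < ‖f y‖} with hG_def
    have hGopen : IsOpen G :=
      isOpen_lt continuous_const (continuous_norm.comp hfc)
    set W : Set X := interior U ∩ G ∩ ⋂ j : Fin n₀, V j with hW_def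
    have hWopen : IsOpen W := by
      refine ((isOpen_interior.inter hGopen).inter ?_)
      exact isOpen_iInter_of_finite fun j => hVopen j
    have hxW : x ∈ W := by
      refine ⟨⟨mem_interior_iff_mem_nhds.mpr hU, ?_⟩, ?_⟩
      · show 3 * c / 4 < ‖f x‖
        rw [← hc_def]; linarith
      · exact Set.mem_iInter.mpr fun j => hVx j
    obtain ⟨m, hm1, z, hzW, y, hyW, hyz⟩ := hx W hWopen hxW
    -- m must be at least n₀
    have hmn : n₀ ≤ m := by
      by_contra hlt
      push_neg at hlt
      have hzV : z ∈ V m := Set.mem_iInter.mp hzW.2 ⟨m, hlt⟩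
      have hyV : y ∈ V m := Set.mem_iInter.mp hyW.2 ⟨m, hlt⟩
      exact hVsep m hm1 y hyV z hzV hyz
    -- get the contradiction
    have hyU : y ∈ U := interior_subset hyW.1.1
    have h1 := hUp y hyU (m - n₀)
    rw [hacc x hniso (m - n₀), sub_zero] at h1
    have hmrw : n₀ + (m - n₀) = m := by omega
    rw [hmrw, hyz] at h1
    rw [norm_mul] at h1
    have hza : 3 * c / 4 < ‖f z‖ := hzW.1.2
    have hya : 3 * c / 4 < ‖f y‖ := hyW.1.2
    have h2 : (3 * c / 4) * (3 * c / 4) ≤ ‖f z‖ * ‖f y‖ := by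
      apply mul_le_mul hza.le hya.le (by positivity) (norm_nonneg _)
    nlinarith
end

section
/- Let X be a locally compact metrizable space and φ : X → X a homeomorphism. Let X_w denote the set of points of X possessing an open wandering neighborhood. Then the smallest norm-closed subalgebra of C₀(X) containing every h ∈ C₀(X) whose cozero set D(h) = {x ∈ X : h(x) ≠ 0} is wandering equals the ideal {f ∈ C₀(X) : f(x) = 0 for all x ∈ X \ X_w}. -/
open Filter ZeroAtInfty

/-! Functions with wandering cozero set vanish off `X_w`, and vanishing off a fixed set is a
closed condition in `C₀(X)`. Conversely, if `f` vanishes off `X_w`, the compact set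
`{|f| ≥ ε}` is covered by finitely many open wandering sets; multiplying `f` by a subordinate
partition of unity splits it, up to `ε` in norm, into a sum of functions whose cozero sets lie in
these wandering sets, hence are wandering. -/

section Wandering

variable {X : Type*}

def IsWandering (φ : X → X) (U : Set X) : Prop :=
  ∀ m n : ℕ, m ≠ n → φ^[m] '' U ∩ φ^[n] '' U = ∅

theorem IsWandering.mono {φ : X → X} {U V : Set X} (hV : IsWandering φ V) (hUV : U ⊆ V) :
    IsWandering φ U := fun m n hmn =>
  Set.subset_eq_empty (Set.inter_subset_inter (Set.image_mono hUV) (Set.image_mono hUV))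
    (hV m n hmn)

def wanderingSet [TopologicalSpace X] (φ : X → X) : Set X :=
  {x | ∃ U, IsOpen U ∧ x ∈ U ∧ IsWandering φ U}

end Wandering

namespace ZeroAtInftyContinuousMap

variable {X : Type*} [TopologicalSpace X]

theorem continuous_eval_const {β : Type*} [PseudoMetricSpace β] [Zero β] (x : X) :
    Continuous fun f : C₀(X, β) => f x :=
  (ContinuousEvalConst.continuous_eval_const (F := BoundedContinuousFunction X β) x).comp
    isometry_toBCF.continuous

theorem sum_apply {β : Type*} [TopologicalSpace β] [AddCommMonoid β] [ContinuousAdd β]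
    {ι : Type*} (s : Finset ι) (f : ι → C₀(X, β)) (x : X) :
    (∑ i ∈ s, f i) x = ∑ i ∈ s, f i x :=
  map_sum (⟨⟨fun g : C₀(X, β) => g x, rfl⟩, fun _ _ => rfl⟩ : C₀(X, β) →+ β) f s

theorem norm_le {β : Type*} [SeminormedAddCommGroup β] {f : C₀(X, β)} {C : ℝ} (hC : 0 ≤ C) :
    ‖f‖ ≤ C ↔ ∀ x, ‖f x‖ ≤ C := by
  rw [← norm_toBCF_eq_norm]
  exact BoundedContinuousFunction.norm_le hC

theorem isCompact_setOf_le_norm {β : Type*} [SeminormedAddCommGroup β] (f : C₀(X, β)) {ε : ℝ}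
    (hε : 0 < ε) : IsCompact {x | ε ≤ ‖f x‖} := by
  obtain ⟨C, hC, hCf⟩ := mem_cocompact.mp <|
    (zero_at_infty f).norm (eventually_lt_nhds (by simpa using hε))
  refine hC.of_isClosed_subset (isClosed_le continuous_const (map_continuous f).norm) ?_
  intro x hx
  by_contra hxC
  exact (hCf hxC).not_ge hx.out

variable {𝕜 : Type*} [RCLike 𝕜]

variable (𝕜) in
def vanishingOff (s : Set X) : NonUnitalSubalgebra 𝕜 C₀(X, 𝕜) where
  carrier := {f | ∀ x ∉ s, f x = 0}
  add_mem' hf hg x hx := by simp [hf x hx, hg x hx]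
  zero_mem' _ _ := rfl
  mul_mem' hf _ x hx := by simp [hf x hx]
  smul_mem' _ _ hf x hx := by simp [hf x hx]

theorem isClosed_vanishingOff (s : Set X) : IsClosed (vanishingOff 𝕜 s : Set C₀(X, 𝕜)) := by
  have : (vanishingOff 𝕜 s : Set C₀(X, 𝕜)) = ⋂ x ∈ sᶜ, (fun f : C₀(X, 𝕜) => f x) ⁻¹' {0} := by
    ext f
    simp only [Set.mem_iInter, Set.mem_compl_iff, Set.mem_preimage, Set.mem_singleton_iff]
    rfl
  rw [this]
  exact isClosed_biInter fun x _ => isClosed_singleton.preimage (continuous_eval_const x)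

theorem adjoin_le_vanishingOff {s : Set X} {S : Set C₀(X, 𝕜)}
    (hS : ∀ h ∈ S, Function.support h ⊆ s) : NonUnitalAlgebra.adjoin 𝕜 S ≤ vanishingOff 𝕜 s :=
  NonUnitalAlgebra.adjoin_le fun h hh _ hx =>
    Function.notMem_support.mp fun hxh => hx (hS h hh hxh)

theorem norm_one_sub_ofReal_mul_le {a : ℝ} (h₀ : 0 ≤ a) (h₁ : a ≤ 1) (z : 𝕜) :
    ‖(1 - (a : 𝕜)) * z‖ ≤ ‖z‖ := by
  rw [norm_mul, ← RCLike.ofReal_one, ← RCLike.ofReal_sub, RCLike.norm_ofReal,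
    abs_of_nonneg (sub_nonneg.mpr h₁)]
  exact mul_le_of_le_one_left (norm_nonneg z) (by linarith)

theorem exists_sum_eqOn_of_isCompact [T2Space X] [LocallyCompactSpace X] {ι : Type*} [Fintype ι]
    {K : Set X} (hK : IsCompact K) {U : ι → Set X} (hU : ∀ i, IsOpen (U i))
    (hKU : K ⊆ ⋃ i, U i) (f : C₀(X, 𝕜)) :
    ∃ g : ι → C₀(X, 𝕜), (∀ i, Function.support (g i) ⊆ U i) ∧
      (∀ x ∈ K, ∑ i, g i x = f x) ∧ ∀ x, ‖f x - ∑ i, g i x‖ ≤ ‖f x‖ := by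
  obtain ⟨p, hpU, hpc⟩ := PartitionOfUnity.exists_isSubordinate_of_locallyFinite_t2space hK U hU
    (locallyFinite_of_finite U) hKU
  have hsum : ∀ x, ∑ i, (p i x : 𝕜) * f x = ((∑ i, p i x : ℝ) : 𝕜) * f x := fun x => by
    push_cast; rw [Finset.sum_mul]
  refine ⟨fun i => ⟨⟨fun x => (p i x : 𝕜) * f x, by fun_prop⟩,
    ((hpc i).comp_left RCLike.ofReal_zero).mul_right.is_zero_at_infty⟩,
    fun i => ?_, fun x hx => ?_, fun x => ?_⟩
  · refine fun x hx => hpU i (subset_tsupport _ fun hpx => hx ?_)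
    simp [hpx]
  · have h1 := p.sum_eq_one hx
    rw [finsum_eq_sum_of_fintype] at h1
    simp [hsum, h1]
  · have h1 := p.sum_le_one x
    rw [finsum_eq_sum_of_fintype] at h1
    change ‖f x - ∑ i, (p i x : 𝕜) * f x‖ ≤ ‖f x‖
    rw [hsum, ← one_sub_mul]
    exact norm_one_sub_ofReal_mul_le (Finset.sum_nonneg fun i _ => p.nonneg i x) h1 _

theorem mem_closure_span_of_forall_ne_zero [T2Space X] [LocallyCompactSpace X]
    {P : Set X → Prop} (hP : ∀ ⦃U V⦄, U ⊆ V → P V → P U) {f : C₀(X, 𝕜)}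
    (hf : ∀ x, f x ≠ 0 → ∃ U, IsOpen U ∧ x ∈ U ∧ P U) :
    f ∈ closure (Submodule.span 𝕜 {h : C₀(X, 𝕜) | P (Function.support h)} : Set C₀(X, 𝕜)) := by
  refine Metric.mem_closure_iff.mpr fun ε hε => ?_
  set K := {x | ε / 2 ≤ ‖f x‖}
  have hK : IsCompact K := f.isCompact_setOf_le_norm (half_pos hε)
  have hfK : ∀ x ∈ K, f x ≠ 0 := fun x hx h0 => by
    have : ε / 2 ≤ ‖f x‖ := hx
    rw [h0, norm_zero] at this
    linarith
  choose U hUo hxU hPU using fun x : K => hf x (hfK x x.2)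
  obtain ⟨t, ht⟩ := hK.elim_finite_subcover U hUo fun x hx =>
    Set.mem_iUnion.mpr ⟨⟨x, hx⟩, hxU _⟩
  have htU : K ⊆ ⋃ i : t, U i := fun x hx => by
    obtain ⟨i, hi, hxi⟩ := Set.mem_iUnion₂.mp (ht hx)
    exact Set.mem_iUnion.mpr ⟨⟨i, hi⟩, hxi⟩
  obtain ⟨g, hgU, hgK, hg⟩ := exists_sum_eqOn_of_isCompact hK (fun i : t => hUo i) htU f
  refine ⟨∑ i, g i, sum_mem fun i _ => Submodule.subset_span (hP (hgU i) (hPU i)), ?_⟩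
  rw [dist_eq_norm]
  refine ((norm_le (half_pos hε).le).mpr fun x => ?_).trans_lt (half_lt_self hε)
  rw [sub_apply, sum_apply]
  by_cases hx : x ∈ K
  · rw [hgK x hx, sub_self, norm_zero]
    exact (half_pos hε).le
  · exact (hg x).trans (not_le.mp hx).le

end ZeroAtInftyContinuousMap

open ZeroAtInftyContinuousMap

/-- The smallest norm-closed subalgebra of `C₀(X)` containing every function
whose cozero set is wandering is the ideal of functions vanishing off the set
`X_w` of wandering points. -/
theorem closed_subalgebra_generated_by_wandering_cozero_functions
    {X : Type*} [TopologicalSpace X] [LocallyCompactSpace X]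
    [TopologicalSpace.MetrizableSpace X]
    (φ : X ≃ₜ X) :
    closure ((NonUnitalAlgebra.adjoin ℂ
        {h : C₀(X, ℂ) | ∀ m n : ℕ, m ≠ n →
          ((⇑φ)^[m] '' {x : X | h x ≠ 0}) ∩ ((⇑φ)^[n] '' {x : X | h x ≠ 0}) = ∅} :
        NonUnitalSubalgebra ℂ C₀(X, ℂ)) : Set C₀(X, ℂ)) =
      {f : C₀(X, ℂ) | ∀ x : X,
        x ∉ {y : X | ∃ U : Set X, IsOpen U ∧ y ∈ U ∧ ∀ m n : ℕ, m ≠ n →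
          ((⇑φ)^[m] '' U) ∩ ((⇑φ)^[n] '' U) = ∅} → f x = 0} := by
  change closure (NonUnitalAlgebra.adjoin ℂ {h : C₀(X, ℂ) | IsWandering φ (Function.support h)} :
    Set C₀(X, ℂ)) = (vanishingOff ℂ (wanderingSet φ) : Set C₀(X, ℂ))
  refine subset_antisymm (closure_minimal ?_ (isClosed_vanishingOff _)) fun f hf => ?_
  · refine adjoin_le_vanishingOff fun h hh x hx => ⟨_, ?_, hx, hh⟩
    exact isOpen_ne_fun (map_continuous h) continuous_const
  · refine closure_mono (Submodule.span_le.mpr (NonUnitalAlgebra.subset_adjoin ℂ))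
      (mem_closure_span_of_forall_ne_zero (fun _ _ hUV hV => hV.mono hUV) fun x hx => ?_)
    by_contra hxW
    exact hx (hf x hxW)
end

section
/- Let X be a discrete topological space, f ∈ C₀(X), φ : X → X an injective map, and x ∈ X a point that is not recurrent. Then lim_{l→∞} f(φ^l(x)) = 0. -/
open Filter Topology

/-- On a discrete space, if `f ∈ C₀(X)`, `φ` is injective and `x` is not
recurrent, then `f(φ^l(x)) → 0` as `l → ∞`. -/
theorem tendsto_zero_along_orbit_of_not_recurrent
    {X : Type*} [TopologicalSpace X] [DiscreteTopology X]
    (f : X → ℂ) (hf0 : Tendsto f (cocompact X) (𝓝 0))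
    (φ : X → X) (hφ : Function.Injective φ) (x : X)
    (hnrec : ¬ ∃ n : ℕ → ℕ, StrictMono n ∧ Tendsto (fun k => φ^[n k] x) atTop (𝓝 x)) :
    Tendsto (fun l : ℕ => f (φ^[l] x)) atTop (𝓝 0) := by
  have hper : ∀ p : ℕ, 0 < p → φ^[p] x ≠ x := by
    intro p hp hpx
    apply hnrec
    refine ⟨fun k => (k + 1) * p, ?_, ?_⟩
    · intro a b hab
      exact (Nat.mul_lt_mul_right hp).mpr (by omega)
    · have key : ∀ k, φ^[(k + 1) * p] x = x := by
        intro k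
        induction k with
        | zero => simpa using hpx
        | succ n ih =>
          have : (n + 2) * p = p + (n + 1) * p := by ring
          rw [this, Function.iterate_add_apply, ih, hpx]
      simp only [key]
      exact tendsto_const_nhds
  have hinj : Function.Injective (fun l : ℕ => φ^[l] x) := by
    have key : ∀ a b : ℕ, a < b → φ^[a] x ≠ φ^[b] x := by
      intro a b hab heq
      have hb : b = a + (b - a) := by omega
      rw [hb, Function.iterate_add_apply] at heq
      have := (hφ.iterate a) heq.symm
      exact hper (b - a) (by omega) this
    intro a b hab
    by_contra hne
    rcases lt_or_gt_of_ne hne with h | h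
    · exact key a b h hab
    · exact key b a h hab.symm
  have horb : Tendsto (fun l : ℕ => φ^[l] x) atTop (cocompact X) := by
    rw [hasBasis_cocompact.tendsto_right_iff]
    intro K hK
    have hKfin : K.Finite := hK.finite_of_discrete
    have hpre : Set.Finite ((fun l : ℕ => φ^[l] x) ⁻¹' K) :=
      hKfin.preimage hinj.injOn
    rw [← Nat.cofinite_eq_atTop]
    exact Set.Finite.eventually_cofinite_notMem hpre
  exact hf0.comp horb
end

section
/- Let X be a discrete topological space, φ : X → X a homeomorphism (equivalently, a bijection), f, g ∈ C₀(X), and n ∈ ℕ. Then the following are equivalent: (i) f(φ^{n+l}(x)) · g(x) = 0 for every recurrent point x ∈ X and every l ∈ ℕ; (ii) lim_{l→∞} f(φ^{n+l}(x)) · g(x) = 0 for every x ∈ X. -/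
open Filter Topology

/-- On a discrete space with `φ` a bijection and `f, g ∈ C₀(X)`, vanishing of
`f(φ^{n+l}(x)) g(x)` at recurrent points is equivalent to
`f(φ^{n+l}(x)) g(x) → 0` as `l → ∞` for every `x`. -/
theorem discrete_vanishing_at_recurrent_iff_tendsto_zero
    {X : Type*} [TopologicalSpace X] [DiscreteTopology X]
    (φ : X → X) (hφ : Function.Bijective φ)
    (f g : X → ℂ)
    (hf0 : Tendsto f (cocompact X) (𝓝 0)) (hg0 : Tendsto g (cocompact X) (𝓝 0))
    (n : ℕ) :
    (∀ x : X,
        (∃ m : ℕ → ℕ, StrictMono m ∧ Tendsto (fun k => φ^[m k] x) atTop (𝓝 x)) →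
        ∀ l : ℕ, f (φ^[n + l] x) * g x = 0) ↔
      (∀ x : X, Tendsto (fun l : ℕ => f (φ^[n + l] x) * g x) atTop (𝓝 0)) := by
  constructor
  · intro h x
    by_cases hx : ∃ m : ℕ → ℕ, StrictMono m ∧ Tendsto (fun k => φ^[m k] x) atTop (𝓝 x)
    · have : (fun l : ℕ => f (φ^[n + l] x) * g x) = fun _ => (0 : ℂ) := by
        funext l; exact h x hx l
      rw [this]; exact tendsto_const_nhds
    · -- x is not recurrent, hence the orbit map is injective
      have hper : ∀ p : ℕ, 1 ≤ p → φ^[p] x = x → False := by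
        intro p hp hfix
        apply hx
        refine ⟨fun k => (k + 1) * p, ?_, ?_⟩
        · intro a b hab
          exact (Nat.mul_lt_mul_right hp).mpr (by omega)
        · have : (fun k : ℕ => φ^[(k + 1) * p] x) = fun _ => x := by
            funext k
            rw [mul_comm, Function.iterate_mul]
            exact Function.iterate_fixed hfix _
          rw [this]; exact tendsto_const_nhds
      have hinj : Function.Injective (fun l : ℕ => φ^[n + l] x) := by
        intro a b hab
        simp only at hab
        by_contra hne
        rcases Nat.lt_or_ge a b with hlt | hge
        · have : φ^[n + b] x = φ^[n + a] (φ^[b - a] x) := by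
            rw [← Function.iterate_add_apply]
            congr 1; omega
          rw [this] at hab
          have := (Function.Injective.iterate hφ.injective (n + a)) hab
          exact hper (b - a) (by omega) this.symm
        · have hlt : b < a := by omega
          have : φ^[n + a] x = φ^[n + b] (φ^[a - b] x) := by
            rw [← Function.iterate_add_apply]
            congr 1; omega
          rw [this] at hab
          have := (Function.Injective.iterate hφ.injective (n + b)) hab
          exact hper (a - b) (by omega) this
      have hcc : Tendsto (fun l : ℕ => φ^[n + l] x) atTop (cocompact X) := by
        rw [hasBasis_cocompact.tendsto_right_iff]
        intro K hK
        have hfin : ((fun l : ℕ => φ^[n + l] x) ⁻¹' K).Finite :=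
          (hK.finite ⟨inferInstance⟩).preimage hinj.injOn
        have := hfin.eventually_cofinite_notMem
        rwa [Nat.cofinite_eq_atTop] at this
      have := (hf0.comp hcc).mul (tendsto_const_nhds (x := g x))
      simpa using this
  · intro h x hx l
    obtain ⟨m, hm, hmt⟩ := hx
    rw [nhds_discrete, tendsto_pure] at hmt
    obtain ⟨k, hk1, hk2⟩ := (hmt.and (eventually_ge_atTop 1)).exists
    set p := m k with hp
    have hp1 : 1 ≤ p := le_trans hk2 hm.le_apply
    have hfix : φ^[p] x = x := hk1
    have hsub : Tendsto (fun j : ℕ => l + j * p) atTop atTop := by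
      apply tendsto_atTop_atTop.mpr
      intro b
      exact ⟨b, fun a ha => by nlinarith⟩
    have hconst : (fun j : ℕ => f (φ^[n + (l + j * p)] x) * g x)
        = fun _ => f (φ^[n + l] x) * g x := by
      funext j
      congr 2
      have : φ^[j * p] x = x := by
        rw [mul_comm, Function.iterate_mul]
        exact Function.iterate_fixed hfix _
      calc φ^[n + (l + j * p)] x = φ^[n + l] (φ^[j * p] x) := by
            rw [← Function.iterate_add_apply]; congr 1; omega
        _ = φ^[n + l] x := by rw [this]
    have := (h x).comp hsub
    rw [show ((fun l : ℕ => f (φ^[n + l] x) * g x) ∘ fun j : ℕ => l + j * p)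
        = fun j : ℕ => f (φ^[n + (l + j * p)] x) * g x from rfl, hconst] at this
    exact tendsto_nhds_unique tendsto_const_nhds this
end

section
/- Let X be a locally compact metrizable space, φ : X → X a homeomorphism, f, g ∈ C₀(X), and n ∈ ℕ. Assume: (i) f(φ^{n+l}(x)) · f(x) = 0 for every l ∈ ℕ and every accumulation point x of X; (ii) the family {(f∘φ^{n+l}) · f}_{l ∈ ℕ} is equicontinuous at every point of X; (iii) g(x) = 0 for every recurrent point x ∈ X. Then for every isolated point x ∈ X, lim_{l→∞} f(φ^{n+l}(x)) · g(x) = 0. -/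
open Filter Topology

/-- Under conditions (i)–(iii) of Corollary 2.6 (applied to `f` and `g`),
`f(φ^{n+l}(x)) g(x) → 0` at every isolated point `x`. -/
theorem tendsto_zero_at_isolated_points
    {X : Type*} [TopologicalSpace X] [LocallyCompactSpace X]
    [TopologicalSpace.MetrizableSpace X]
    (φ : X ≃ₜ X) (f g : X → ℂ)
    (hfc : Continuous f) (hf0 : Tendsto f (cocompact X) (𝓝 0))
    (hgc : Continuous g) (hg0 : Tendsto g (cocompact X) (𝓝 0))
    (n : ℕ)
    (hacc : ∀ x : X, ¬ IsOpen ({x} : Set X) → ∀ l : ℕ,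
      f ((⇑φ)^[n + l] x) * f x = 0)
    (heq : ∀ x₀ : X, ∀ ε > (0 : ℝ), ∃ U ∈ 𝓝 x₀, ∀ x ∈ U, ∀ l : ℕ,
      ‖f ((⇑φ)^[n + l] x) * f x - f ((⇑φ)^[n + l] x₀) * f x₀‖ < ε)
    (hrec : ∀ x : X,
      (∃ m : ℕ → ℕ, StrictMono m ∧ Tendsto (fun k => (⇑φ)^[m k] x) atTop (𝓝 x)) →
      g x = 0) :
    ∀ x : X, IsOpen ({x} : Set X) →
      Tendsto (fun l : ℕ => f ((⇑φ)^[n + l] x) * g x) atTop (𝓝 0) := by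
  intro x hx
  by_cases hg : g x = 0
  · simpa [hg] using (tendsto_const_nhds : Tendsto (fun _ : ℕ => (0:ℂ)) atTop (𝓝 0))
  have key : Tendsto (fun l : ℕ => f ((⇑φ)^[n + l] x)) atTop (𝓝 0) := by
    by_contra hcon
    rw [NormedAddCommGroup.tendsto_nhds_zero] at hcon
    push_neg at hcon
    obtain ⟨ε, εpos, hfreq⟩ := hcon
    have hfreq' : ∃ᶠ l in atTop, ε ≤ ‖f ((⇑φ)^[n + l] x)‖ := by
      exact hfreq
    obtain ⟨m, hm, hml⟩ := Filter.extraction_of_frequently_atTop hfreq'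
    set u : ℕ → X := fun k => (⇑φ)^[n + m k] x with hu
    -- the sequence lives in a compact set
    have hball : {z : ℂ | ‖z‖ < ε} ∈ 𝓝 (0 : ℂ) := by
      have : Metric.ball (0:ℂ) ε ∈ 𝓝 (0:ℂ) := Metric.ball_mem_nhds 0 εpos
      simpa [Metric.ball, dist_eq_norm] using this
    obtain ⟨K, hK, hKsub⟩ := mem_cocompact.mp (hf0 hball)
    have huK : ∀ k, u k ∈ K := by
      intro k
      by_contra hk
      have : ‖f (u k)‖ < ε := hKsub hk
      exact absurd (hml k) (not_le.mpr this)
    obtain ⟨y, -, ψ, hψ, hyt⟩ := hK.tendsto_subseq huK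
    by_cases hy : IsOpen ({y} : Set X)
    · -- y is isolated, so the sequence is eventually equal to y, x is periodic
      have hev : ∀ᶠ j in atTop, u (ψ j) ∈ ({y} : Set X) :=
        hyt (hy.mem_nhds rfl)
      obtain ⟨N, hN⟩ := hev.exists_forall_of_atTop
      have h1 : (⇑φ)^[n + m (ψ N)] x = y := hN N le_rfl
      have h2 : (⇑φ)^[n + m (ψ (N+1))] x = y := hN (N+1) (Nat.le_succ N)
      set q := n + m (ψ N) with hq
      have hlt : m (ψ N) < m (ψ (N+1)) := hm (hψ (Nat.lt_succ_self N))
      set p := m (ψ (N+1)) - m (ψ N) with hp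
      have hppos : 0 < p := Nat.sub_pos_of_lt hlt
      have hsum : n + m (ψ (N+1)) = p + q := by omega
      have h3 : (⇑φ)^[p] y = y := by
        rw [← h1, ← Function.iterate_add_apply, ← hsum, h2]
        exact h1.symm
      have hpx : (⇑φ)^[p] x = x := by
        have hinj : Function.Injective ((⇑φ)^[q]) :=
          Function.Injective.iterate φ.injective q
        apply hinj
        calc (⇑φ)^[q] ((⇑φ)^[p] x) = (⇑φ)^[q + p] x :=
              (Function.iterate_add_apply _ q p x).symm
          _ = (⇑φ)^[p + q] x := by rw [Nat.add_comm]
          _ = (⇑φ)^[p] ((⇑φ)^[q] x) := by rw [Function.iterate_add_apply]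
          _ = (⇑φ)^[p] y := by rw [h1]
          _ = y := h3
          _ = (⇑φ)^[q] x := h1.symm
      -- x is recurrent
      have hx0 : g x = 0 := by
        refine hrec x ⟨fun k => (k+1) * p, ?_, ?_⟩
        · intro a b hab
          exact (Nat.mul_lt_mul_right hppos).mpr (Nat.succ_lt_succ hab)
        · have : (fun k : ℕ => (⇑φ)^[(k+1) * p] x) = fun _ => x := by
            funext k
            rw [Nat.mul_comm, Function.iterate_mul]
            exact Function.iterate_fixed hpx (k+1)
          rw [this]
          exact tendsto_const_nhds
      exact hg hx0
    · -- y is an accumulation point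
      have hFy : ∀ l : ℕ, f ((⇑φ)^[n + l] y) * f y = 0 := hacc y hy
      obtain ⟨U, hU, hUlt⟩ := heq y (ε * ε) (mul_pos εpos εpos)
      have hevU : ∀ᶠ j in atTop, u (ψ j) ∈ U := hyt hU
      obtain ⟨j, hjU⟩ := hevU.exists
      set a := m (ψ j) with ha
      set j' := max (j + 1) (a + n) with hj'
      have hb : a + n ≤ m (ψ j') := by
        have h1 : j' ≤ m (ψ j') := (hm.comp hψ).le_apply
        have h2 : a + n ≤ j' := le_max_right _ _
        omega
      set b := m (ψ j') with hbdef
      set l := b - a - n with hl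
      have harith : (n + l) + (n + a) = n + b := by omega
      have hcomp : (⇑φ)^[n + l] (u (ψ j)) = u (ψ j') := by
        show (⇑φ)^[n + l] ((⇑φ)^[n + a] x) = (⇑φ)^[n + b] x
        rw [← Function.iterate_add_apply, harith]
      have hineq := hUlt (u (ψ j)) hjU l
      rw [hFy l, sub_zero, hcomp] at hineq
      have h1 : ε ≤ ‖f (u (ψ j'))‖ := hml (ψ j')
      have h2 : ε ≤ ‖f (u (ψ j))‖ := hml (ψ j)
      have hprod : ε * ε ≤ ‖f (u (ψ j')) * f (u (ψ j))‖ := by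
        rw [norm_mul]
        exact mul_le_mul h1 h2 εpos.le (le_trans εpos.le h1)
        
      exact absurd hineq (not_lt.mpr hprod)
  simpa using key.mul_const (g x)
end

section
/- Let X ⊆ ℝ be the subspace X = {0} ∪ {x_n : n ∈ ℤ} ∪ {2}, where x_n = 1/(|n|+1) for n < 0 and x_n = 2 − 1/(n+1) for n ≥ 0, and let φ : X → X be the map with φ(0) = 0, φ(2) = 2, and φ(x_n) = x_{n−1} for all n ∈ ℤ. Let f : X → ℂ be the indicator function of {1} (note x_0 = 1) and g : X → ℂ the indicator function of {x ∈ X : x > 1}. Then: (i) φ is a homeomorphism and f, g ∈ C₀(X); (ii) f(φ^{1+l}(x)) · g(x) = 0 for every l ∈ ℕ and each of the accumulation points x ∈ {0, 2} of X; (iii) lim_{l→∞} f(φ^{1+l}(x)) · g(x) = 0 for every x ∈ X; (iv) nevertheless, the family {(f∘φ^{1+l}) · g}_{l ∈ ℕ} is not equicontinuous at the point 2. -/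
open Filter Topology

/-- The sequence of points of the dynamical system in the example:
`x_n = 1/(|n|+1)` for `n < 0` and `x_n = 2 - 1/(n+1)` for `n ≥ 0`. -/
noncomputable def xseq (n : ℤ) : ℝ :=
  if n < 0 then 1 / ((|n| : ℝ) + 1) else 2 - 1 / ((n : ℝ) + 1)

/-- The space `X = {0} ∪ {x_n : n ∈ ℤ} ∪ {2}` of the example. -/
def Xset : Set ℝ := {0, 2} ∪ Set.range xseq

lemma mem0 : (0:ℝ) ∈ Xset := Or.inl (Or.inl rfl)
lemma mem2 : (2:ℝ) ∈ Xset := Or.inl (Or.inr rfl)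
lemma memx (n : ℤ) : xseq n ∈ Xset := Or.inr ⟨n, rfl⟩

lemma classify (x : ↥Xset) : (x:ℝ) = 0 ∨ (x:ℝ) = 2 ∨ ∃ n, (x:ℝ) = xseq n := by
  rcases x.2 with (h | h) | ⟨n, h⟩
  · exact Or.inl h
  · exact Or.inr (Or.inl h)
  · exact Or.inr (Or.inr ⟨n, h.symm⟩)

lemma xseq_neg {n : ℤ} (h : n < 0) : xseq n = 1 / (-(n:ℝ) + 1) := by
  rw [xseq, if_pos h]
  congr 2
  push_cast
  rw [abs_of_neg (show (n:ℝ) < 0 by exact_mod_cast h)]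

lemma xseq_nonneg {n : ℤ} (h : 0 ≤ n) : xseq n = 2 - 1 / ((n:ℝ) + 1) := by
  rw [xseq, if_neg (not_lt.2 h)]

lemma xseq_pos (n : ℤ) : 0 < xseq n := by
  rcases lt_or_ge n 0 with h | h
  · rw [xseq_neg h]
    have : (0:ℝ) < -(n:ℝ) + 1 := by
      have : (n:ℝ) < 0 := by exact_mod_cast h
      linarith
    positivity
  · rw [xseq_nonneg h]
    have h1 : (0:ℝ) < (n:ℝ) + 1 := by
      have : (0:ℝ) ≤ (n:ℝ) := by exact_mod_cast h
      linarith
    have : 1 / ((n:ℝ) + 1) ≤ 1 := by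
      rw [div_le_one h1]
      have : (0:ℝ) ≤ (n:ℝ) := by exact_mod_cast h
      linarith
    linarith

lemma xseq_lt_two (n : ℤ) : xseq n < 2 := by
  rcases lt_or_ge n 0 with h | h
  · rw [xseq_neg h]
    have h1 : (1:ℝ) ≤ -(n:ℝ) + 1 := by
      have : (n:ℝ) ≤ 0 := by exact_mod_cast h.le
      linarith
    have : 1 / (-(n:ℝ) + 1) ≤ 1 := by
      rw [div_le_one (by linarith)]; exact h1
    linarith
  · rw [xseq_nonneg h]
    have h1 : (0:ℝ) < (n:ℝ) + 1 := by
      have : (0:ℝ) ≤ (n:ℝ) := by exact_mod_cast h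
      linarith
    have : 0 < 1 / ((n:ℝ) + 1) := by positivity
    linarith

lemma xseq_mono : StrictMono xseq := by
  apply strictMono_int_of_lt_succ
  intro n
  rcases lt_trichotomy n (-1) with h | h | h
  · have hn : n < 0 := by omega
    have hn1 : n + 1 < 0 := by omega
    rw [xseq_neg hn, xseq_neg hn1]
    have hc : (n:ℝ) ≤ -2 := by exact_mod_cast (by omega : n ≤ -2)
    push_cast
    rw [div_lt_div_iff₀ (by linarith) (by linarith)]
    nlinarith
  · subst h
    rw [xseq_neg (by norm_num), xseq_nonneg (by norm_num)]
    norm_num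
  · have hn : 0 ≤ n := by omega
    rw [xseq_nonneg hn, xseq_nonneg (by omega)]
    have hc : (0:ℝ) ≤ (n:ℝ) := by exact_mod_cast hn
    have : 1 / ((n:ℝ) + 1 + 1) < 1 / ((n:ℝ) + 1) := by
      push_cast
      rw [div_lt_div_iff₀ (by linarith) (by linarith)]
      nlinarith
    push_cast
    push_cast at this
    linarith

lemma xseq_zero : xseq 0 = 1 := by rw [xseq_nonneg le_rfl]; norm_num

lemma xseq_eq_one {n : ℤ} : xseq n = 1 ↔ n = 0 := by
  constructor
  · intro h
    by_contra hne
    rcases lt_or_gt_of_ne hne with hl | hg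
    · have := xseq_mono hl; rw [h, xseq_zero] at this; exact lt_irrefl _ this
    · have := xseq_mono hg; rw [h, xseq_zero] at this; exact lt_irrefl _ this
  · intro h; subst h; exact xseq_zero

lemma one_lt_xseq {n : ℤ} : 1 < xseq n ↔ 0 < n := by
  rw [← xseq_zero]
  exact ⟨fun h => xseq_mono.lt_iff_lt.mp h, fun h => xseq_mono h⟩

lemma exists_small {ε : ℝ} (hε : 0 < ε) : ∃ M : ℤ, xseq M < ε := by
  obtain ⟨k, hk⟩ := exists_nat_gt (1/ε)
  refine ⟨-(k:ℤ) - 1, ?_⟩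
  rw [xseq_neg (by omega)]
  push_cast
  rw [div_lt_iff₀ (by have := Nat.cast_nonneg (α := ℝ) k; linarith)]
  rw [div_lt_iff₀ hε] at hk
  nlinarith

lemma exists_close {ε : ℝ} (hε : 0 < ε) : ∃ M : ℤ, 2 - xseq M < ε := by
  obtain ⟨k, hk⟩ := exists_nat_gt (1/ε)
  refine ⟨(k:ℤ), ?_⟩
  rw [xseq_nonneg (by positivity)]
  have hk0 : (0:ℝ) ≤ (k:ℕ) := Nat.cast_nonneg k
  rw [div_lt_iff₀ hε] at hk
  have : 1 / ((k:ℝ) + 1) < ε := by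
    rw [div_lt_iff₀ (by linarith)]
    nlinarith
  push_cast
  linarith

lemma gap (n : ℤ) : ∃ δ > 0, ∀ y ∈ Xset, |y - xseq n| < δ → y = xseq n := by
  refine ⟨min (xseq n - xseq (n-1)) (xseq (n+1) - xseq n), ?_, ?_⟩
  · apply lt_min <;> [skip; skip] <;>
      simp only [sub_pos] <;> exact xseq_mono (by omega)
  · intro y hy hclose
    have hd1 : xseq n - xseq (n-1) ≤ xseq n - xseq (n-1) := le_rfl
    have hmin1 : min (xseq n - xseq (n-1)) (xseq (n+1) - xseq n) ≤ xseq n - xseq (n-1) := min_le_left _ _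
    have hmin2 : min (xseq n - xseq (n-1)) (xseq (n+1) - xseq n) ≤ xseq (n+1) - xseq n := min_le_right _ _
    rcases hy with (h | h) | ⟨m, h⟩
    · exfalso
      subst h
      rw [abs_of_nonpos (by linarith [xseq_pos n])] at hclose
      have := xseq_pos (n-1)
      linarith
    · exfalso
      subst h
      rw [abs_of_nonneg (by linarith [xseq_lt_two n])] at hclose
      have := xseq_lt_two (n+1)
      linarith
    · subst h
      rcases lt_trichotomy m n with hm | hm | hm
      · exfalso
        have h1 : xseq m ≤ xseq (n-1) := xseq_mono.monotone (by omega)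
        rw [abs_of_nonpos (by linarith [xseq_mono hm])] at hclose
        linarith
      · rw [hm]
      · exfalso
        have h1 : xseq (n+1) ≤ xseq m := xseq_mono.monotone (by omega)
        rw [abs_of_nonneg (by linarith [xseq_mono hm])] at hclose
        linarith

lemma cont_shift (c : ℤ) (ψ : ↥Xset → ↥Xset)
    (h0 : ∀ x : ↥Xset, (x:ℝ) = 0 → ((ψ x : ℝ) = 0))
    (h2 : ∀ x : ↥Xset, (x:ℝ) = 2 → ((ψ x : ℝ) = 2))
    (hn : ∀ n : ℤ, ∀ x : ↥Xset, (x:ℝ) = xseq n → ((ψ x : ℝ) = xseq (n + c))) :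
    Continuous ψ := by
  rw [continuous_iff_continuousAt]
  intro x
  rw [Metric.continuousAt_iff]
  intro ε hε
  rcases classify x with hx | hx | ⟨n, hx⟩
  · -- at 0
    obtain ⟨M, hM⟩ := exists_small hε
    refine ⟨xseq (M - c), xseq_pos _, fun y hy => ?_⟩
    rw [Subtype.dist_eq, Real.dist_eq, hx] at hy
    rw [Subtype.dist_eq, Real.dist_eq, h0 x hx]
    rcases classify y with hy0 | hy2 | ⟨m, hym⟩
    · rw [h0 y hy0]; simpa using hε
    · exfalso
      rw [hy2] at hy
      rw [abs_of_nonneg (by norm_num)] at hy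
      have := xseq_lt_two (M - c)
      linarith
    · rw [hym] at hy
      rw [hn m y hym]
      rw [abs_of_nonneg (by linarith [xseq_pos m])] at hy
      rw [abs_of_nonneg (by linarith [xseq_pos (m+c)])]
      have hmc : m < M - c := by
        by_contra hcon
        push_neg at hcon
        have : xseq (M - c) ≤ xseq m := xseq_mono.monotone hcon
        linarith
      have : xseq (m + c) < xseq M := xseq_mono (by omega)
      simpa using lt_trans this hM
  · -- at 2
    obtain ⟨M, hM⟩ := exists_close hε
    refine ⟨2 - xseq (M - c), by linarith [xseq_lt_two (M - c)], fun y hy => ?_⟩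
    rw [Subtype.dist_eq, Real.dist_eq, hx] at hy
    rw [Subtype.dist_eq, Real.dist_eq, h2 x hx]
    rcases classify y with hy0 | hy2 | ⟨m, hym⟩
    · exfalso
      rw [hy0] at hy
      rw [abs_of_nonpos (by norm_num)] at hy
      have := xseq_pos (M - c)
      linarith
    · rw [h2 y hy2]; simpa using hε
    · rw [hym] at hy
      rw [hn m y hym]
      rw [abs_of_nonpos (by linarith [xseq_lt_two m])] at hy
      rw [abs_of_nonpos (by linarith [xseq_lt_two (m+c)])]
      have hmc : M - c < m := by
        by_contra hcon
        push_neg at hcon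
        have : xseq m ≤ xseq (M - c) := xseq_mono.monotone hcon
        linarith
      have : xseq M < xseq (m + c) := xseq_mono (by omega)
      linarith
  · -- at isolated point xseq n
    obtain ⟨δ, hδ, hiso⟩ := gap n
    refine ⟨δ, hδ, fun y hy => ?_⟩
    rw [Subtype.dist_eq, Real.dist_eq, hx] at hy
    have : (y:ℝ) = xseq n := hiso _ y.2 hy
    have hyx : y = x := Subtype.ext (this.trans hx.symm)
    rw [hyx]
    simpa using hε

lemma cont_loc (F : ↥Xset → ℂ)
    (h : ∀ x : ↥Xset, ∃ δ > (0:ℝ), ∀ y : ↥Xset, |(y:ℝ) - (x:ℝ)| < δ → F y = F x) :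
    Continuous F := by
  rw [continuous_iff_continuousAt]
  intro x
  rw [Metric.continuousAt_iff]
  intro ε hε
  obtain ⟨δ, hδ, hF⟩ := h x
  refine ⟨δ, hδ, fun y hy => ?_⟩
  rw [Subtype.dist_eq, Real.dist_eq] at hy
  rw [hF y hy]
  simpa using hε

lemma cont_f (f : ↥Xset → ℂ) (hf : ∀ x : ↥Xset, f x = if (x : ℝ) = 1 then 1 else 0) :
    Continuous f := by
  apply cont_loc
  intro x
  rcases classify x with hx | hx | ⟨n, hx⟩
  · refine ⟨1/2, by norm_num, fun y hy => ?_⟩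
    rw [hx] at hy
    rw [hf, hf, if_neg (show ¬(y:ℝ) = 1 by intro h1; rw [h1] at hy; norm_num at hy),
      if_neg (by rw [hx]; norm_num)]
  · refine ⟨1/2, by norm_num, fun y hy => ?_⟩
    rw [hx] at hy
    rw [hf, hf, if_neg (show ¬(y:ℝ) = 1 by intro h1; rw [h1] at hy; norm_num at hy),
      if_neg (by rw [hx]; norm_num)]
  · obtain ⟨δ, hδ, hiso⟩ := gap n
    refine ⟨δ, hδ, fun y hy => ?_⟩
    rw [hx] at hy
    have := hiso _ y.2 hy
    rw [hf, hf, this, hx]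

lemma cont_g (g : ↥Xset → ℂ) (hg : ∀ x : ↥Xset, g x = if 1 < (x : ℝ) then 1 else 0) :
    Continuous g := by
  apply cont_loc
  intro x
  rcases classify x with hx | hx | ⟨n, hx⟩
  · refine ⟨1/2, by norm_num, fun y hy => ?_⟩
    rw [hx] at hy
    rw [abs_lt] at hy
    rw [hg, hg, if_neg (show ¬1 < (y:ℝ) by push_neg; linarith [hy.2]),
      if_neg (by rw [hx]; norm_num)]
  · refine ⟨1/2, by norm_num, fun y hy => ?_⟩
    rw [hx] at hy
    rw [abs_lt] at hy
    rw [hg, hg, if_pos (show 1 < (y:ℝ) by linarith [hy.1]),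
      if_pos (by rw [hx]; norm_num)]
  · obtain ⟨δ, hδ, hiso⟩ := gap n
    refine ⟨δ, hδ, fun y hy => ?_⟩
    rw [hx] at hy
    have := hiso _ y.2 hy
    rw [hg, hg, this, hx]

lemma tendsto_xseq : Tendsto (fun N : ℕ => xseq ((N:ℤ) + 1)) atTop (𝓝 2) := by
  rw [Metric.tendsto_atTop]
  intro ε hε
  obtain ⟨M, hM⟩ := exists_close hε
  refine ⟨M.toNat, fun n hn => ?_⟩
  rw [Real.dist_eq]
  have h1 : M ≤ (n:ℤ) + 1 := by
    have : M ≤ (M.toNat : ℤ) := Int.self_le_toNat M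
    have : (M.toNat : ℤ) ≤ (n : ℤ) := by exact_mod_cast hn
    omega
  have h2 : xseq M ≤ xseq ((n:ℤ) + 1) := xseq_mono.monotone h1
  rw [abs_of_nonpos (by linarith [xseq_lt_two ((n:ℤ)+1)])]
  linarith

lemma compact_K : IsCompact {x : ↥Xset |
    (x:ℝ) ∈ insert (2:ℝ) (Set.range (fun N : ℕ => xseq ((N:ℤ)+1)))} := by
  have hKr : IsCompact (insert (2:ℝ) (Set.range (fun N : ℕ => xseq ((N:ℤ)+1)))) :=
    tendsto_xseq.isCompact_insert_range
  rw [Topology.IsEmbedding.subtypeVal.isCompact_iff]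
  convert hKr using 1
  ext y
  constructor
  · rintro ⟨x, hx, rfl⟩; exact hx
  · intro hy
    have hyX : y ∈ Xset := by
      rcases hy with h | ⟨N, h⟩
      · rw [h]; exact mem2
      · rw [← h]; exact memx _
    exact ⟨⟨y, hyX⟩, hy, rfl⟩

lemma cocompact_f (f : ↥Xset → ℂ) (hf : ∀ x : ↥Xset, f x = if (x : ℝ) = 1 then 1 else 0) :
    Tendsto f (cocompact ↥Xset) (𝓝 0) := by
  refine Tendsto.congr' ?_ (tendsto_const_nhds (x := (0:ℂ)) (f := cocompact ↥Xset))
  rw [EventuallyEq, eventually_iff, mem_cocompact]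
  refine ⟨{(⟨1, by rw [← xseq_zero]; exact memx 0⟩ : ↥Xset)}, isCompact_singleton, fun x hx => ?_⟩
  simp only [Set.mem_compl_iff, Set.mem_singleton_iff] at hx
  have : (x:ℝ) ≠ 1 := fun h => hx (Subtype.ext h)
  show (0:ℂ) = f x
  rw [hf, if_neg this]

lemma cocompact_g (g : ↥Xset → ℂ) (hg : ∀ x : ↥Xset, g x = if 1 < (x : ℝ) then 1 else 0) :
    Tendsto g (cocompact ↥Xset) (𝓝 0) := by
  refine Tendsto.congr' ?_ (tendsto_const_nhds (x := (0:ℂ)) (f := cocompact ↥Xset))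
  rw [EventuallyEq, eventually_iff, mem_cocompact]
  refine ⟨_, compact_K, fun x hx => ?_⟩
  simp only [Set.mem_compl_iff, Set.mem_setOf_eq] at hx
  show (0:ℂ) = g x
  rw [hg, if_neg ?_]
  intro h1
  apply hx
  rcases classify x with h | h | ⟨m, h⟩
  · rw [h] at h1; norm_num at h1
  · rw [h]; exact Set.mem_insert _ _
  · rw [h] at h1 ⊢
    have hm : 0 < m := one_lt_xseq.mp h1
    refine Set.mem_insert_iff.mpr (Or.inr ⟨(m-1).toNat, ?_⟩)
    show xseq (((m-1).toNat : ℤ) + 1) = xseq m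
    congr 1
    omega

lemma iter0 (φ : ↥Xset → ↥Xset)
    (hφ0 : ∀ x : ↥Xset, (x : ℝ) = 0 → ((φ x : ℝ) = 0)) : ∀ (k : ℕ) (x : ↥Xset), (x:ℝ) = 0 → ((φ^[k] x : ℝ) = 0) := by
  intro k
  induction k with
  | zero => intro x hx; simpa using hx
  | succ k ih =>
    intro x hx
    rw [Function.iterate_succ_apply]
    exact ih _ (hφ0 x hx)

lemma iter2 (φ : ↥Xset → ↥Xset)
    (hφ2 : ∀ x : ↥Xset, (x : ℝ) = 2 → ((φ x : ℝ) = 2)) : ∀ (k : ℕ) (x : ↥Xset), (x:ℝ) = 2 → ((φ^[k] x : ℝ) = 2) := by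
  intro k
  induction k with
  | zero => intro x hx; simpa using hx
  | succ k ih =>
    intro x hx
    rw [Function.iterate_succ_apply]
    exact ih _ (hφ2 x hx)

lemma itern (φ : ↥Xset → ↥Xset)
    (hφn : ∀ n : ℤ, ∀ x : ↥Xset, (x : ℝ) = xseq n → ((φ x : ℝ) = xseq (n - 1))) : ∀ (k : ℕ) (n : ℤ) (x : ↥Xset), (x:ℝ) = xseq n →
    ((φ^[k] x : ℝ) = xseq (n - k)) := by
  intro k
  induction k with
  | zero => intro n x hx; simpa using hx
  | succ k ih =>
    intro n x hx
    rw [Function.iterate_succ_apply]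
    have := ih (n-1) _ (hφn n x hx)
    rw [this]
    congr 1
    push_cast
    ring


/-- The example: `φ` fixes `0` and `2` and shifts `x_n ↦ x_{n-1}`; `f` is the
indicator of `{1}` and `g` the indicator of `{x > 1}`. Then `φ` is a
homeomorphism, `f, g ∈ C₀(X)`, `f(φ^{1+l}(x)) g(x) = 0` at the accumulation
points `0, 2`, `f(φ^{1+l}(x)) g(x) → 0` at every point, yet the family
`{(f ∘ φ^{1+l}) · g}_l` is not equicontinuous at `2`. -/
theorem example_noncompact_multiplication
    (φ : ↥Xset → ↥Xset)
    (hφ0 : ∀ x : ↥Xset, (x : ℝ) = 0 → ((φ x : ℝ) = 0))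
    (hφ2 : ∀ x : ↥Xset, (x : ℝ) = 2 → ((φ x : ℝ) = 2))
    (hφn : ∀ n : ℤ, ∀ x : ↥Xset, (x : ℝ) = xseq n → ((φ x : ℝ) = xseq (n - 1)))
    (f g : ↥Xset → ℂ)
    (hf : ∀ x : ↥Xset, f x = if (x : ℝ) = 1 then 1 else 0)
    (hg : ∀ x : ↥Xset, g x = if 1 < (x : ℝ) then 1 else 0) :
    (∃ e : ↥Xset ≃ₜ ↥Xset, ⇑e = φ) ∧
    (Continuous f ∧ Tendsto f (cocompact ↥Xset) (𝓝 0)) ∧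
    (Continuous g ∧ Tendsto g (cocompact ↥Xset) (𝓝 0)) ∧
    (∀ l : ℕ, ∀ x : ↥Xset, ((x : ℝ) = 0 ∨ (x : ℝ) = 2) →
      f (φ^[1 + l] x) * g x = 0) ∧
    (∀ x : ↥Xset, Tendsto (fun l : ℕ => f (φ^[1 + l] x) * g x) atTop (𝓝 0)) ∧
    (∀ x₂ : ↥Xset, (x₂ : ℝ) = 2 →
      ¬ (∀ ε > (0 : ℝ), ∃ U ∈ 𝓝 x₂, ∀ x ∈ U, ∀ l : ℕ,
        ‖f (φ^[1 + l] x) * g x - f (φ^[1 + l] x₂) * g x₂‖ < ε)) := by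
  have h4 : ∀ l : ℕ, ∀ x : ↥Xset, ((x : ℝ) = 0 ∨ (x : ℝ) = 2) →
      f (φ^[1 + l] x) * g x = 0 := by
    intro l x hx
    rcases hx with hx | hx
    · rw [hf, if_neg (by rw [iter0 φ hφ0 (1+l) x hx]; norm_num), zero_mul]
    · rw [hf, if_neg (by rw [iter2 φ hφ2 (1+l) x hx]; norm_num), zero_mul]
  refine ⟨?_, ⟨cont_f f hf, cocompact_f f hf⟩, ⟨cont_g g hg, cocompact_g g hg⟩, h4, ?_, ?_⟩
  · -- homeomorphism
    have hinj : Function.Injective φ := by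
      intro a b hab
      have h : ((φ a : ℝ)) = ((φ b : ℝ)) := by rw [hab]
      rcases classify a with ha | ha | ⟨n, ha⟩ <;> rcases classify b with hb | hb | ⟨m, hb⟩
      · exact Subtype.ext (ha.trans hb.symm)
      · rw [hφ0 a ha, hφ2 b hb] at h; norm_num at h
      · exfalso; rw [hφ0 a ha, hφn m b hb] at h
        have := xseq_pos (m-1); linarith
      · rw [hφ2 a ha, hφ0 b hb] at h; norm_num at h
      · exact Subtype.ext (ha.trans hb.symm)
      · exfalso; rw [hφ2 a ha, hφn m b hb] at h
        have := xseq_lt_two (m-1); linarith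
      · exfalso; rw [hφn n a ha, hφ0 b hb] at h
        have := xseq_pos (n-1); linarith
      · exfalso; rw [hφn n a ha, hφ2 b hb] at h
        have := xseq_lt_two (n-1); linarith
      · rw [hφn n a ha, hφn m b hb] at h
        have hnm : n = m := by have := xseq_mono.injective h; omega
        exact Subtype.ext (by rw [ha, hb, hnm])
    have hsurj : Function.Surjective φ := by
      intro y
      rcases classify y with hy | hy | ⟨n, hy⟩
      · exact ⟨⟨0, mem0⟩, Subtype.ext (by rw [hφ0 ⟨0, mem0⟩ rfl, hy])⟩
      · exact ⟨⟨2, mem2⟩, Subtype.ext (by rw [hφ2 ⟨2, mem2⟩ rfl, hy])⟩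
      · refine ⟨⟨xseq (n+1), memx _⟩, Subtype.ext ?_⟩
        rw [hφn (n+1) ⟨xseq (n+1), memx _⟩ rfl, hy]
        congr 1
        ring
    let e : ↥Xset ≃ ↥Xset := Equiv.ofBijective φ ⟨hinj, hsurj⟩
    have hsymm : ∀ x : ↥Xset, φ (e.symm x) = x := fun x => e.apply_symm_apply x
    have hψ0 : ∀ x : ↥Xset, (x:ℝ) = 0 → ((e.symm x : ℝ) = 0) := by
      intro x hx
      rcases classify (e.symm x) with h | h | ⟨m, h⟩
      · exact h
      · exfalso
        have := hφ2 _ h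
        rw [hsymm x, hx] at this
        norm_num at this
      · exfalso
        have h2 := hφn m _ h
        rw [hsymm x, hx] at h2
        have := xseq_pos (m-1)
        linarith
    have hψ2 : ∀ x : ↥Xset, (x:ℝ) = 2 → ((e.symm x : ℝ) = 2) := by
      intro x hx
      rcases classify (e.symm x) with h | h | ⟨m, h⟩
      · exfalso
        have := hφ0 _ h
        rw [hsymm x, hx] at this
        norm_num at this
      · exact h
      · exfalso
        have h2 := hφn m _ h
        rw [hsymm x, hx] at h2
        have := xseq_lt_two (m-1)
        linarith
    have hψn : ∀ n : ℤ, ∀ x : ↥Xset, (x:ℝ) = xseq n → ((e.symm x : ℝ) = xseq (n + 1)) := by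
      intro n x hx
      rcases classify (e.symm x) with h | h | ⟨m, h⟩
      · exfalso
        have h2 := hφ0 _ h
        rw [hsymm x, hx] at h2
        have := xseq_pos n
        linarith
      · exfalso
        have h2 := hφ2 _ h
        rw [hsymm x, hx] at h2
        have := xseq_lt_two n
        linarith
      · have h2 := hφn m _ h
        rw [hsymm x, hx] at h2
        have hmn : m = n + 1 := by have := xseq_mono.injective h2; omega
        rw [h, hmn]
    have hcφ : Continuous φ := by
      apply cont_shift (-1) φ hφ0 hφ2
      intro n x hx
      rw [hφn n x hx]
      congr 1
    have hcψ : Continuous ⇑e.symm := cont_shift 1 e.symm hψ0 hψ2 hψn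
    exact ⟨{ toEquiv := e, continuous_toFun := hcφ, continuous_invFun := hcψ }, rfl⟩
  · -- pointwise limit
    intro x
    rcases classify x with hx | hx | ⟨n, hx⟩
    · have he : (fun l : ℕ => f (φ^[1+l] x) * g x) = fun _ => 0 :=
        funext fun l => h4 l x (Or.inl hx)
      rw [he]; exact tendsto_const_nhds
    · have he : (fun l : ℕ => f (φ^[1+l] x) * g x) = fun _ => 0 :=
        funext fun l => h4 l x (Or.inr hx)
      rw [he]; exact tendsto_const_nhds
    · by_cases h1 : 1 < xseq n
      · have hn : 0 < n := one_lt_xseq.mp h1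
        refine Tendsto.congr' ?_ (tendsto_const_nhds (x := (0:ℂ)) (f := atTop))
        filter_upwards [eventually_ge_atTop n.toNat] with l hl
        have hit : ((φ^[1+l] x : ℝ)) = xseq (n - ((1+l : ℕ) : ℤ)) := itern φ hφn (1+l) n x hx
        have hne : (n : ℤ) - ((1+l : ℕ) : ℤ) ≠ 0 := by
          have hcast : (n.toNat : ℤ) ≤ (l : ℤ) := by exact_mod_cast hl
          push_cast
          push_cast at hcast
          omega
        rw [hf, if_neg (by rw [hit]; intro hc; exact hne (xseq_eq_one.mp hc)), zero_mul]
      · have he : (fun l : ℕ => f (φ^[1+l] x) * g x) = fun _ => 0 := by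
          funext l
          rw [hg, if_neg (by rw [hx]; exact h1), mul_zero]
        rw [he]; exact tendsto_const_nhds
  · -- not equicontinuous at 2
    intro x₂ hx2 hcon
    obtain ⟨U, hU, hUx⟩ := hcon 1 one_pos
    rw [Metric.mem_nhds_iff] at hU
    obtain ⟨δ, hδ, hball⟩ := hU
    obtain ⟨M, hM⟩ := exists_close hδ
    set M' : ℤ := max M 1 with hM'def
    have hM'1 : 1 ≤ M' := le_max_right _ _
    have hMle : xseq M ≤ xseq M' := xseq_mono.monotone (le_max_left _ _)
    set x : ↥Xset := ⟨xseq M', memx M'⟩ with hxdef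
    have hxcoe : (x : ℝ) = xseq M' := rfl
    have hxU : x ∈ U := by
      apply hball
      rw [Metric.mem_ball, Subtype.dist_eq, Real.dist_eq, hx2, hxcoe]
      rw [abs_of_nonpos (by linarith [xseq_lt_two M'])]
      linarith
    set l : ℕ := (M' - 1).toNat with hldef
    have hcast : (M' : ℤ) - ((1 + l : ℕ) : ℤ) = 0 := by push_cast; omega
    have hit : ((φ^[1+l] x : ℝ)) = 1 := by
      rw [itern φ hφn (1+l) M' x hxcoe, hcast, xseq_zero]
    have hfx : f (φ^[1+l] x) = 1 := by rw [hf, if_pos hit]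
    have hgx : g x = 1 := by
      rw [hg, if_pos]
      rw [hxcoe]
      exact one_lt_xseq.mpr (by omega)
    have hzero : f (φ^[1+l] x₂) * g x₂ = 0 := h4 l x₂ (Or.inr hx2)
    have hfin := hUx x hxU l
    rw [hfx, hgx, hzero] at hfin
    norm_num at hfin
end
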